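/- (The fixed point is the unique maximizer of the total load) Suppose ρ* ≥ 0 satisfies f_i(ρ*) = ρ*_i for every cell i. Then for every ρ ∈ ℝ_{≥0}^n with ρ_i ≤ f_i(ρ) for all i, one has Σ_{i=1}^n ρ_i ≤ Σ_{i=1}^n ρ*_i, and equality holds only if ρ = ρ*. -/

import Mathlib

/-!
The load map `f` is a standard interference function: it is positive, monotone, and strictly
subhomogeneous, `f (t • ρ) < t • f ρ` for `t > 1`, the latter by Bernoulli's inequality
`1 + t y ≤ (1 + y) ^ t`. If `ρ ≤ f ρ` but `ρ ≰ ρ*`, let `t > 1` be the largest ratio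
`ρ i / ρ* i`, attained at `i₀`. Then `ρ ≤ t • ρ*`, and
`ρ i₀ ≤ f i₀ ρ ≤ f i₀ (t • ρ*) < t * f i₀ ρ* = t * ρ* i₀ = ρ i₀`.
Hence `ρ ≤ ρ*` componentwise, which gives both the inequality of sums and its equality case.
-/

open Finset

section InterferenceFunction

variable {ι : Type*} [Fintype ι] {F : ι → (ι → ℝ) → ℝ}

theorem le_of_le_apply_of_strictSubhomogeneous
    (hmono : ∀ σ τ, 0 ≤ σ → σ ≤ τ → ∀ i, F i σ ≤ F i τ)
    (hscal : ∀ σ, 0 ≤ σ → ∀ t, 1 < t → ∀ i, F i (t • σ) < t * F i σ)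
    {ρstar : ι → ℝ} (hpos : ∀ i, 0 < ρstar i) (hfix : ∀ i, F i ρstar = ρstar i)
    {ρ : ι → ℝ} (hρ : 0 ≤ ρ) (hle : ∀ i, ρ i ≤ F i ρ) : ρ ≤ ρstar := by
  by_contra hnot
  obtain ⟨i₁, hi₁⟩ : ∃ i, ρstar i < ρ i := by simpa [Pi.le_def] using hnot
  have : Nonempty ι := ⟨i₁⟩
  obtain ⟨i₀, hi₀⟩ := Finite.exists_max fun i => ρ i / ρstar i
  set t := ρ i₀ / ρstar i₀
  have ht : 1 < t := ((one_lt_div (hpos i₁)).mpr hi₁).trans_le (hi₀ i₁)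
  have hρt : ρ ≤ t • ρstar := fun k => (div_le_iff₀ (hpos k)).mp (hi₀ k)
  have hρstar : 0 ≤ ρstar := fun k => (hpos k).le
  have : ρ i₀ < ρ i₀ :=
    calc ρ i₀ ≤ F i₀ ρ := hle i₀
      _ ≤ F i₀ (t • ρstar) := hmono ρ _ hρ hρt i₀
      _ < t * F i₀ ρstar := hscal ρstar hρstar t ht i₀
      _ = ρ i₀ := by rw [hfix, div_mul_cancel₀ _ (hpos i₀).ne']
  exact lt_irrefl _ this

end InterferenceFunction

theorem Real.log_one_add_mul_le {y t : ℝ} (hy : 0 ≤ y) (ht : 1 ≤ t) :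
    Real.log (1 + t * y) ≤ t * Real.log (1 + y) := by
  rw [← Real.log_rpow (by linarith)]
  exact Real.log_le_log (by nlinarith) (one_add_mul_self_le_rpow_one_add (by linarith) ht)

/-- Inverse of the rate `a log₂ (1 + SINR)` of a pixel with interference `S` and noise `c`. -/
noncomputable def pixelLoad (a c S : ℝ) : ℝ :=
  1 / (a * Real.logb 2 (1 + 1 / (S + c)))

section PixelLoad

variable {a c S : ℝ}

theorem logb_one_add_inv_pos {x : ℝ} (hx : 0 < x) : 0 < Real.logb 2 (1 + 1 / x) :=
  Real.logb_pos one_lt_two (by have := one_div_pos.mpr hx; linarith)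

theorem pixelLoad_pos (ha : 0 < a) (hc : 0 < c) (hS : 0 ≤ S) : 0 < pixelLoad a c S := by
  have := logb_one_add_inv_pos (by linarith : 0 < S + c)
  unfold pixelLoad
  positivity

theorem pixelLoad_mono (ha : 0 < a) (hc : 0 < c) (hS : 0 ≤ S) {S' : ℝ} (hSS' : S ≤ S') :
    pixelLoad a c S ≤ pixelLoad a c S' := by
  have hlog' := logb_one_add_inv_pos (by linarith : 0 < S' + c)
  have hlog : Real.logb 2 (1 + 1 / (S' + c)) ≤ Real.logb 2 (1 + 1 / (S + c)) := by
    have := one_div_pos.mpr (by linarith : 0 < S' + c)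
    refine Real.logb_le_logb_of_le one_lt_two (by linarith) ?_
    gcongr
  exact one_div_le_one_div_of_le (by positivity) (mul_le_mul_of_nonneg_left hlog ha.le)

theorem logb_one_add_inv_lt_mul {t : ℝ} (hc : 0 < c) (hS : 0 ≤ S) (ht : 1 < t) :
    Real.logb 2 (1 + 1 / (S + c)) < t * Real.logb 2 (1 + 1 / (t * S + c)) := by
  have hu : 0 < t * S + c := by nlinarith
  have hinv : 1 / (S + c) < t * (1 / (t * S + c)) := by
    rw [mul_one_div, div_lt_div_iff₀ (by linarith) hu]
    nlinarith
  have hbern := Real.log_one_add_mul_le (one_div_pos.mpr hu).le ht.le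
  simp only [Real.logb, ← mul_div_assoc]
  gcongr
  exact (Real.log_lt_log (by positivity) (by linarith)).trans_le hbern

theorem pixelLoad_mul_lt {t : ℝ} (ha : 0 < a) (hc : 0 < c) (hS : 0 ≤ S) (ht : 1 < t) :
    pixelLoad a c (t * S) < t * pixelLoad a c S := by
  have hlog := logb_one_add_inv_pos (by nlinarith : 0 < t * S + c)
  have hlog' := logb_one_add_inv_pos (by linarith : 0 < S + c)
  unfold pixelLoad
  rw [mul_one_div, div_lt_div_iff₀ (by positivity) (by positivity), one_mul]
  calc a * Real.logb 2 (1 + 1 / (S + c))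
      < a * (t * Real.logb 2 (1 + 1 / (t * S + c))) :=
        mul_lt_mul_of_pos_left (logb_one_add_inv_lt_mul hc hS ht) ha
    _ = t * (a * Real.logb 2 (1 + 1 / (t * S + c))) := by ring

end PixelLoad

section CellLoad

variable {α ι : Type*} {J : Finset α} {s : Finset ι} {a c : α → ℝ} {w : α → ι → ℝ}

noncomputable def cellLoad (J : Finset α) (s : Finset ι) (a c : α → ℝ) (w : α → ι → ℝ)
    (σ : ι → ℝ) : ℝ :=
  ∑ j ∈ J, pixelLoad (a j) (c j) (∑ k ∈ s, w j k * σ k)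

theorem cellLoad_pos (ha : ∀ j ∈ J, 0 < a j) (hc : ∀ j ∈ J, 0 < c j)
    (hw : ∀ j ∈ J, ∀ k ∈ s, 0 ≤ w j k) (hJ : J.Nonempty) {σ : ι → ℝ} (hσ : 0 ≤ σ) :
    0 < cellLoad J s a c w σ :=
  sum_pos (fun j hj => pixelLoad_pos (ha j hj) (hc j hj)
    (sum_nonneg fun k hk => mul_nonneg (hw j hj k hk) (hσ k))) hJ

theorem cellLoad_mono (ha : ∀ j ∈ J, 0 < a j) (hc : ∀ j ∈ J, 0 < c j)
    (hw : ∀ j ∈ J, ∀ k ∈ s, 0 ≤ w j k) {σ τ : ι → ℝ} (hσ : 0 ≤ σ) (hστ : σ ≤ τ) :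
    cellLoad J s a c w σ ≤ cellLoad J s a c w τ :=
  sum_le_sum fun j hj => pixelLoad_mono (ha j hj) (hc j hj)
    (sum_nonneg fun k hk => mul_nonneg (hw j hj k hk) (hσ k))
    (sum_le_sum fun k hk => mul_le_mul_of_nonneg_left (hστ k) (hw j hj k hk))

theorem cellLoad_smul_lt (ha : ∀ j ∈ J, 0 < a j) (hc : ∀ j ∈ J, 0 < c j)
    (hw : ∀ j ∈ J, ∀ k ∈ s, 0 ≤ w j k) (hJ : J.Nonempty) {σ : ι → ℝ} (hσ : 0 ≤ σ)
    {t : ℝ} (ht : 1 < t) :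
    cellLoad J s a c w (t • σ) < t * cellLoad J s a c w σ := by
  unfold cellLoad
  rw [mul_sum]
  refine sum_lt_sum_of_nonempty hJ fun j hj => ?_
  have hlin : ∑ k ∈ s, w j k * (t • σ) k = t * ∑ k ∈ s, w j k * σ k := by
    rw [mul_sum]
    exact sum_congr rfl fun k _ => by simp only [Pi.smul_apply, smul_eq_mul]; ring
  rw [hlin]
  exact pixelLoad_mul_lt (ha j hj) (hc j hj)
    (sum_nonneg fun k hk => mul_nonneg (hw j hj k hk) (hσ k)) ht

end CellLoad

theorem stmt_18_general
    (n : ℕ)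
    (J : Fin n → Finset ℕ) (hJ : ∀ i, (J i).Nonempty)
    (a c : Fin n → ℕ → ℝ) (b : Fin n → Fin n → ℕ → ℝ)
    (ha : ∀ i, ∀ j ∈ J i, 0 < a i j)
    (hc : ∀ i, ∀ j ∈ J i, 0 < c i j)
    (hb : ∀ i k, k ≠ i → ∀ j ∈ J i, 0 < b i k j)
    (f : Fin n → (Fin n → ℝ) → ℝ)
    (hf : ∀ i ρ, f i ρ =
      ∑ j ∈ J i, 1 / (a i j * Real.logb 2
        (1 + 1 / (∑ k ∈ Finset.univ.erase i, b i k j * ρ k + c i j))))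
    (ρstar : Fin n → ℝ) (hρstar : ∀ i, 0 ≤ ρstar i)
    (hfix : ∀ i, f i ρstar = ρstar i)
    (ρ : Fin n → ℝ) (hρ : ∀ i, 0 ≤ ρ i) (hle : ∀ i, ρ i ≤ f i ρ) :
    ∑ i, ρ i ≤ ∑ i, ρstar i ∧ (∑ i, ρ i = ∑ i, ρstar i → ρ = ρstar) := by
  have hf' : ∀ i σ, f i σ = cellLoad (J i) (univ.erase i) (a i) (c i) (fun j k => b i k j) σ :=
    hf
  have hw : ∀ i, ∀ j ∈ J i, ∀ k ∈ univ.erase i, 0 ≤ b i k j :=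
    fun i j hj k hk => (hb i k (ne_of_mem_erase hk) j hj).le
  have hpos : ∀ i, 0 < ρstar i := fun i => by
    rw [← hfix, hf']
    exact cellLoad_pos (ha i) (hc i) (hw i) (hJ i) hρstar
  have hdom : ρ ≤ ρstar :=
    le_of_le_apply_of_strictSubhomogeneous
      (fun σ τ hσ hστ i => by
        simpa only [hf'] using cellLoad_mono (ha i) (hc i) (hw i) hσ hστ)
      (fun σ hσ t ht i => by
        simpa only [hf'] using cellLoad_smul_lt (ha i) (hc i) (hw i) (hJ i) hσ ht)
      hpos hfix hρ hle
  refine ⟨sum_le_sum fun i _ => hdom i, fun hsum => funext fun i => ?_⟩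
  exact (sum_eq_sum_iff_of_le fun i _ => hdom i).mp hsum i (mem_univ i)

/-- The fixed point `ρ*` is the unique maximizer of the total load over
`{ρ ≥ 0 : ρ ≤ f(ρ)}`. -/
theorem stmt_18
    (n : ℕ) (hn : 2 ≤ n)
    (J : Fin n → Finset ℕ) (hJ : ∀ i, (J i).Nonempty)
    (a c : Fin n → ℕ → ℝ) (b : Fin n → Fin n → ℕ → ℝ)
    (ha : ∀ i, ∀ j ∈ J i, 0 < a i j)
    (hc : ∀ i, ∀ j ∈ J i, 0 < c i j)
    (hb : ∀ i k, k ≠ i → ∀ j ∈ J i, 0 < b i k j)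
    (f : Fin n → (Fin n → ℝ) → ℝ)
    (hf : ∀ i ρ, f i ρ =
      ∑ j ∈ J i, 1 / (a i j * Real.logb 2
        (1 + 1 / (∑ k ∈ Finset.univ.erase i, b i k j * ρ k + c i j))))
    (ρstar : Fin n → ℝ) (hρstar : ∀ i, 0 ≤ ρstar i)
    (hfix : ∀ i, f i ρstar = ρstar i)
    (ρ : Fin n → ℝ) (hρ : ∀ i, 0 ≤ ρ i) (hle : ∀ i, ρ i ≤ f i ρ) :
    ∑ i, ρ i ≤ ∑ i, ρstar i ∧ (∑ i, ρ i = ∑ i, ρstar i → ρ = ρstar) :=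
  stmt_18_general n J hJ a c b ha hc hb f hf ρstar hρstar hfix ρ hρ hle
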